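/- Confluent homotopy is an equivalence relation on paths preserved by morphisms of pHDA: if f : X → Y is a morphism of pHDA and π ∼_ch π' in X, then f(π) ∼_ch f(π') in Y. -/

import Mathlib

open CategoryTheory

/-! ## Words of faces and the merge operation `⋆` -/

/-- Shift all indices of an (index, direction) word by one. -/
def shiftW (t : List (ℕ × Bool)) : List (ℕ × Bool) := t.map (fun p => (p.1 + 1, p.2))

/-- The merge operation `⋆` on (index, direction) words. -/
def starW : List (ℕ × Bool) → List (ℕ × Bool) → List (ℕ × Bool)
  | [], t => t
  | s, [] => s
  | (i, a) :: s, (j, b) :: t =>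
      if i ≤ j then (i, a) :: starW s (shiftW ((j, b) :: t))
      else (j, b) :: starW ((i, a) :: s) t
  termination_by s t => s.length + t.length
  decreasing_by all_goals (simp [shiftW]; try omega)

/-- A word `(i₁ < … < iₙ ; α₁, …, αₙ)`: indices strictly increasing and positive. -/
def SortedWord (w : List (ℕ × Bool)) : Prop :=
  (w.map Prod.fst).Chain' (· < ·) ∧ ∀ p ∈ w, 1 ≤ p.1

/-- Validity of a face word `w` on a cube of dimension `n`. -/
def ValidWord (w : List (ℕ × Bool)) (n : ℕ) : Prop :=
  SortedWord w ∧ ∀ k : Fin w.length, (w.get k).1 ≤ n - w.length + k + 1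

/-! ## Partial higher dimensional automata -/

/-- A partial higher dimensional automaton (pHDA) on the alphabet `L`
(data only; the laws are collected in `IspHDA`).  `faceW w` is the partial
face map `∂_{i₁<…<iₖ}^{α₁,…,αₖ}` associated to the word `w`. -/
structure pHDA (L : Type) : Type 1 where
  cell : Type
  dim : cell → ℕ
  faceW : List (ℕ × Bool) → cell →. cell
  init : cell
  label : cell → List L

/-- The laws of a partial HDA: it is a lax functor `□ᵒᵖ → pSet` with an
initial state of dimension 0 and a labelling morphism to `!L`. -/
structure IspHDA {L : Type} (X : pHDA L) : Prop where
  faceW_nil : ∀ x, X.faceW [] x = Part.some x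
  faceW_comp : ∀ s t x y z, y ∈ X.faceW s x → z ∈ X.faceW t y → z ∈ X.faceW (starW s t) x
  faceW_dim : ∀ w x y, y ∈ X.faceW w x → X.dim x = X.dim y + w.length
  faceW_valid : ∀ w x, (X.faceW w x).Dom → ValidWord w (X.dim x)
  init_dim : X.dim X.init = 0
  label_len : ∀ x, (X.label x).length = X.dim x
  label_face : ∀ i α x y, y ∈ X.faceW [(i, α)] x → X.label y = (X.label x).eraseIdx (i - 1)

/-- A morphism of pHDA: a (total) function on cells commuting laxly with the
face maps (`f ∘ ∂ ⊆ ∂ ∘ f`), preserving dimension, initial state and labels. -/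
structure pHDAHom {L : Type} (X Y : pHDA L) : Type where
  toFun : X.cell → Y.cell
  dim_eq : ∀ x, Y.dim (toFun x) = X.dim x
  face_sub : ∀ w x y, y ∈ X.faceW w x → toFun y ∈ Y.faceW w (toFun x)
  init_eq : toFun X.init = Y.init
  label_eq : ∀ x, Y.label (toFun x) = X.label x

/-- The identity morphism of pHDA. -/
def pHDAHom.id {L : Type} (X : pHDA L) : pHDAHom X X :=
  ⟨fun x => x, fun _ => rfl, fun _ _ _ h => h, rfl, fun _ => rfl⟩

/-- Composition of morphisms of pHDA. -/
def pHDAHom.comp {L : Type} {X Y Z : pHDA L} (g : pHDAHom Y Z) (f : pHDAHom X Y) :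
    pHDAHom X Z where
  toFun x := g.toFun (f.toFun x)
  dim_eq x := by rw [g.dim_eq, f.dim_eq]
  face_sub w x y h := g.face_sub w _ _ (f.face_sub w x y h)
  init_eq := by show g.toFun (f.toFun X.init) = Z.init; rw [f.init_eq, g.init_eq]
  label_eq x := by rw [g.label_eq, f.label_eq]

/-- The category of partial HDA on `L`. -/
instance pHDACategory (L : Type) : Category (pHDA L) where
  Hom := pHDAHom
  id := pHDAHom.id
  comp f g := g.comp f
  id_comp _ := rfl
  comp_id _ := rfl
  assoc _ _ _ := rfl

/-! ## Paths -/

/-- One step of a path: `x →^{j,α} y` means `x = ∂_j^0 y` if `α = 0`, and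
`y = ∂_j^1 x` if `α = 1`. -/
def PathStep {L : Type} (X : pHDA L) (x : X.cell) (j : ℕ) (α : Bool) (y : X.cell) : Prop :=
  if α then y ∈ X.faceW [(j, true)] x else x ∈ X.faceW [(j, false)] y

/-- `IsPath X x p`: `p` is (the list of steps and cells of) a path starting at `x`. -/
def IsPath {L : Type} (X : pHDA L) : X.cell → List ((ℕ × Bool) × X.cell) → Prop
  | _, [] => True
  | x, ((j, α), y) :: rest => PathStep X x j α y ∧ IsPath X y rest

/-- The endpoint of a path starting at the initial state. -/
def pathEnd {L : Type} (X : pHDA L) (p : List ((ℕ × Bool) × X.cell)) : X.cell :=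
  (p.map Prod.snd).getLastD X.init

/-- The type of paths of `X` from the initial state. -/
def PathL {L : Type} (X : pHDA L) : Type :=
  {p : List ((ℕ × Bool) × X.cell) // IsPath X X.init p}

/-- The `k`-th cell along a path (cell `0` is the initial state). -/
def cellAt {L : Type} (X : pHDA L) (p : List ((ℕ × Bool) × X.cell)) (k : ℕ) : X.cell :=
  (X.init :: p.map Prod.snd).getD k X.init

/-- The `k`-th step (1-based) of a path. -/
def stepAt {L : Type} (X : pHDA L) (p : List ((ℕ × Bool) × X.cell)) (k : ℕ) : ℕ × Bool :=
  (p.map Prod.fst).getD (k - 1) (0, true)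

/-- The `⋆`-product `(j₁;α₁) ⋆ … ⋆ (jₙ;αₙ)` of a list of single faces. -/
def starSeg (l : List (ℕ × Bool)) : List (ℕ × Bool) :=
  l.foldl (fun acc p => starW acc [p]) []

/-- The segment of steps `s, …, t` (1-based) of a path. -/
def segSteps {L : Type} (X : pHDA L) (p : List ((ℕ × Bool) × X.cell)) (s t : ℕ) :
    List (ℕ × Bool) :=
  ((p.map Prod.fst).drop (s - 1)).take (t - s + 1)

/-! ## Confluent homotopy -/

/-- Elementary confluent homotopy: the two paths agree outside an interval
`[s,t]` of steps, all steps of both paths in `[s,t]` have direction `1`, and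
the `⋆`-products over `[s,t]` agree. -/
def ElemCH {L : Type} (X : pHDA L) (p q : List ((ℕ × Bool) × X.cell)) : Prop :=
  p.length = q.length ∧
  ∃ s t : ℕ, 0 < s ∧ s < t ∧ t ≤ p.length ∧
    (∀ k, k < s ∨ t ≤ k → cellAt X p k = cellAt X q k) ∧
    (∀ k, 1 ≤ k → k ≤ p.length → (k < s ∨ t < k) → stepAt X p k = stepAt X q k) ∧
    (∀ k, s ≤ k → k ≤ t → (stepAt X p k).2 = true ∧ (stepAt X q k).2 = true) ∧
    starSeg (segSteps X p s t) = starSeg (segSteps X q s t)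

/-- Confluent homotopy: the reflexive transitive closure of elementary
confluent homotopy. -/
def ConfHom {L : Type} (X : pHDA L) :
    List ((ℕ × Bool) × X.cell) → List ((ℕ × Bool) × X.cell) → Prop :=
  Relation.ReflTransGen (ElemCH X)

/-- Confluent homotopy, on paths from the initial state. -/
def CHL {L : Type} (X : pHDA L) : PathL X → PathL X → Prop :=
  fun p q => ConfHom X p.val q.val

/-- The image of a path under a morphism of pHDA. -/
def mapPath {L : Type} {X Y : pHDA L} (f : pHDAHom X Y)
    (p : List ((ℕ × Bool) × X.cell)) : List ((ℕ × Bool) × Y.cell) :=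
  p.map (fun e => (e.1, f.toFun e.2))

/-! ## Spines and path shapes -/

/-- The data of a spine: a list of steps `(jₖ, αₖ)` together with the
dimension–label pair of the target cell (the label `wₖ`; the dimension is its
length).  Cell `0` carries the empty label. -/
def SpineData (L : Type) : Type := List ((ℕ × Bool) × List L)

/-- Validity of a spine continuing from a cell with label `w`. -/
def SpineOk {L : Type} : List L → SpineData L → Prop
  | _, [] => True
  | w, ((j, α), w') :: rest =>
      (if α then 1 ≤ j ∧ j ≤ w.length ∧ w' = w.eraseIdx (j - 1)
       else 1 ≤ j ∧ j ≤ w'.length ∧ w = w'.eraseIdx (j - 1)) ∧ SpineOk w' rest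

/-- A spine `(0,ε) →^{j₁,α₁} … →^{jₙ,αₙ} (dₙ,wₙ)`. -/
def IsSpine {L : Type} (σ : SpineData L) : Prop := SpineOk [] σ

/-- The label of the `k`-th cell of a spine. -/
def spineLabel {L : Type} (σ : SpineData L) (k : ℕ) : List L :=
  (([] : List L) :: σ.map Prod.snd).getD k []

/-- The face relation of the path shape `Bσ`: the smallest relation containing
the generating faces of the spine and closed under `⋆`-composition. -/
inductive BFace {L : Type} (σ : SpineData L) : List (ℕ × Bool) → ℕ → ℕ → Prop
  | nil (k : ℕ) : BFace σ [] k k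
  | face0 (k j : ℕ) : 0 < k → k ≤ σ.length →
      ((σ.map Prod.fst).getD (k - 1) (0, true)) = (j, false) →
      BFace σ [(j, false)] k (k - 1)
  | face1 (k j : ℕ) : k < σ.length →
      ((σ.map Prod.fst).getD k (0, true)) = (j, true) →
      BFace σ [(j, true)] k (k + 1)
  | comp (s t : List (ℕ × Bool)) (k m l : ℕ) :
      BFace σ s k m → BFace σ t m l → BFace σ (starW s t) k l

/-- The path shape `Bσ` associated to a spine `σ`. -/
noncomputable def pathShape {L : Type} (σ : SpineData L) : pHDA L where
  cell := Fin (σ.length + 1)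
  dim k := (spineLabel σ k.val).length
  faceW w k :=
    ⟨∃ m : Fin (σ.length + 1), BFace σ w k.val m.val, fun h => Classical.choose h⟩
  init := ⟨0, Nat.succ_pos _⟩
  label k := spineLabel σ k.val

/-! ## Open maps and coverings w.r.t. path shapes -/

/-- A morphism `f : Y → Z` of pHDA is open w.r.t. the subcategory of path
shapes if it has the right lifting property against every morphism between
path shapes. -/
def POpen {L : Type} {Y Z : pHDA L} (f : pHDAHom Y Z) : Prop :=
  ∀ (σ σ' : SpineData L), IsSpine σ → IsSpine σ' →
    ∀ (g : pHDAHom (pathShape σ) (pathShape σ'))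
      (x : pHDAHom (pathShape σ) Y) (y : pHDAHom (pathShape σ') Z),
      f.comp x = y.comp g →
      ∃ θ : pHDAHom (pathShape σ') Y, θ.comp g = x ∧ f.comp θ = y

/-- A covering: an open map whose lifts are unique. -/
def IsCovering {L : Type} {Y Z : pHDA L} (f : pHDAHom Y Z) : Prop :=
  ∀ (σ σ' : SpineData L), IsSpine σ → IsSpine σ' →
    ∀ (g : pHDAHom (pathShape σ) (pathShape σ'))
      (x : pHDAHom (pathShape σ) Y) (y : pHDAHom (pathShape σ') Z),
      f.comp x = y.comp g →
      ∃! θ : pHDAHom (pathShape σ') Y, θ.comp g = x ∧ f.comp θ = y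

/-! ## Trees, shortcuts, unique path property -/

/-- A tree: a pHDA that is the colimit of a small diagram of path shapes. -/
def IsTree {L : Type} (X : pHDA L) : Prop :=
  ∃ (J : Type) (_ : SmallCategory J) (D : J ⥤ pHDA L),
    (∀ j : J, ∃ σ : SpineData L, IsSpine σ ∧ D.obj j = pathShape σ) ∧
    ∃ c : Limits.Cocone D, Nonempty (Limits.IsColimit c) ∧ c.pt = X

/-- A chain of single faces, applied left to right. -/
def stepChain {L : Type} (X : pHDA L) : List (ℕ × Bool) → X.cell → X.cell → Prop
  | [], x, y => x = y
  | (i, α) :: rest, x, y => ∃ z, z ∈ X.faceW [(i, α)] x ∧ stepChain X rest z y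

/-- `X` has no shortcuts: every defined iterated face factors as a chain of
defined single faces whose `⋆`-product is the given word. -/
def NoShortcut {L : Type} (X : pHDA L) : Prop :=
  ∀ w x, (X.faceW w x).Dom →
    ∃ (l : List (ℕ × Bool)) (y : X.cell), starSeg l = w ∧ stepChain X l x y

/-- The unique path property modulo confluent homotopy: no shortcuts, and for
every cell there is exactly one confluent homotopy class of paths from the
initial state to it. -/
def UniquePathProp {L : Type} (X : pHDA L) : Prop :=
  NoShortcut X ∧ ∀ x : X.cell,
    (∃ p : PathL X, pathEnd X p.val = x) ∧
    ∀ p q : PathL X, pathEnd X p.val = x → pathEnd X q.val = x → CHL X p q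

/-! ## The unfolding -/

/-- The face relation of the unfolding: generated by path extension
(`∂_i^1`), path restriction (`∂_i^0`), and closed under `⋆`-composition. -/
inductive UFace {L : Type} (X : pHDA L) : List (ℕ × Bool) → PathL X → PathL X → Prop
  | nil (p : PathL X) : UFace X [] p p
  | face1 (p q : PathL X) (i : ℕ) (y : X.cell)
      (hy : y ∈ X.faceW [(i, true)] (pathEnd X p.val))
      (hq : q.val = p.val ++ [((i, true), y)]) : UFace X [(i, true)] p q
  | face0 (p q : PathL X) (i : ℕ) (y : X.cell)
      (hp : p.val = q.val ++ [((i, false), y)]) : UFace X [(i, false)] p q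
  | comp (s t : List (ℕ × Bool)) (p q r : PathL X) :
      UFace X s p q → UFace X t q r → UFace X (starW s t) p r

/-- The unfolding `U(X)` of a pHDA `X`: cells are confluent homotopy classes
of paths from the initial state. -/
noncomputable def unfolding {L : Type} (X : pHDA L) : pHDA L where
  cell := Quot (CHL X)
  dim q := X.dim (pathEnd X q.out.val)
  faceW w q :=
    ⟨∃ q' : Quot (CHL X), ∃ p p' : PathL X,
        Quot.mk (CHL X) p = q ∧ Quot.mk (CHL X) p' = q' ∧ UFace X w p p',
      fun h => Classical.choose h⟩
  init := Quot.mk (CHL X) ⟨[], by simp [IsPath]⟩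
  label q := X.label (pathEnd X q.out.val)


theorem getD_map_aux {A B : Type} (f : A → B) (l : List A) (d : A) (k : ℕ) :
    (l.map f).getD k (f d) = f (l.getD k d) := by
  induction l generalizing k with
  | nil => simp
  | cons a l ih => cases k <;> simp [ih]

theorem mapPath_fst {L : Type} {X Y : pHDA L} (f : pHDAHom X Y)
    (p : List ((ℕ × Bool) × X.cell)) :
    (mapPath f p).map Prod.fst = p.map Prod.fst := by
  simp [mapPath]

theorem cellAt_map {L : Type} {X Y : pHDA L} (f : pHDAHom X Y)
    (p : List ((ℕ × Bool) × X.cell)) (k : ℕ) :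
    cellAt Y (mapPath f p) k = f.toFun (cellAt X p k) := by
  have h1 : (mapPath f p).map Prod.snd = (p.map Prod.snd).map f.toFun := by
    simp [mapPath]
  have h2 : Y.init = f.toFun X.init := f.init_eq.symm
  unfold cellAt
  rw [h1, h2]
  have : (f.toFun X.init :: (p.map Prod.snd).map f.toFun)
      = ((X.init :: p.map Prod.snd).map f.toFun) := by simp
  rw [this, getD_map_aux]

theorem stepAt_map {L : Type} {X Y : pHDA L} (f : pHDAHom X Y)
    (p : List ((ℕ × Bool) × X.cell)) (k : ℕ) :
    stepAt Y (mapPath f p) k = stepAt X p k := by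
  unfold stepAt; rw [mapPath_fst]

theorem segSteps_map {L : Type} {X Y : pHDA L} (f : pHDAHom X Y)
    (p : List ((ℕ × Bool) × X.cell)) (s t : ℕ) :
    segSteps Y (mapPath f p) s t = segSteps X p s t := by
  unfold segSteps; rw [mapPath_fst]

theorem elemCH_symm {L : Type} {X : pHDA L} : Symmetric (ElemCH X) := by
  rintro p q ⟨hlen, s, t, hs, hst, ht, hc, hstep, hdir, hstar⟩
  refine ⟨hlen.symm, s, t, hs, hst, hlen ▸ ht, ?_, ?_, ?_, hstar.symm⟩
  · intro k hk; exact (hc k hk).symm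
  · intro k h1 h2 h3; exact (hstep k h1 (hlen ▸ h2) h3).symm
  · intro k h1 h2; exact ⟨(hdir k h1 h2).2, (hdir k h1 h2).1⟩

theorem elemCH_map {L : Type} {X Y : pHDA L} (f : pHDAHom X Y)
    {p q : List ((ℕ × Bool) × X.cell)} (h : ElemCH X p q) :
    ElemCH Y (mapPath f p) (mapPath f q) := by
  obtain ⟨hlen, s, t, hs, hst, ht, hc, hstep, hdir, hstar⟩ := h
  have lp : (mapPath f p).length = p.length := by simp [mapPath]
  have lq : (mapPath f q).length = q.length := by simp [mapPath]
  refine ⟨by rw [lp, lq, hlen], s, t, hs, hst, by rw [lp]; exact ht, ?_, ?_, ?_, ?_⟩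
  · intro k hk; rw [cellAt_map, cellAt_map, hc k hk]
  · intro k h1 h2 h3
    rw [stepAt_map, stepAt_map]; exact hstep k h1 (by rw [lp] at h2; exact h2) h3
  · intro k h1 h2; rw [stepAt_map, stepAt_map]; exact hdir k h1 h2
  · rw [segSteps_map, segSteps_map, hstar]

/-- confluent homotopy is an equivalence relation on paths, and
it is preserved by morphisms of pHDA. -/
theorem confHom_equivalence_and_preserved {L : Type} {X Y : pHDA L}
    (f : pHDAHom X Y) :
    Equivalence (CHL X) ∧
    (∀ p q : List ((ℕ × Bool) × X.cell), IsPath X X.init p → IsPath X X.init q →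
      ConfHom X p q → ConfHom Y (mapPath f p) (mapPath f q)) := by
  constructor
  · exact ⟨fun _ => Relation.ReflTransGen.refl,
      fun h => @Std.Symm.symm _ _ (@Relation.ReflTransGen.stdSymm _ _ ⟨fun _ _ hh => elemCH_symm hh⟩) _ _ h,
      fun h1 h2 => Relation.ReflTransGen.trans h1 h2⟩
  · intro p q _ _ h
    exact Relation.ReflTransGen.lift (mapPath f) (fun _ _ hh => elemCH_map f hh) _ _ h
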